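/- Theorem 3.4, Gegenbauer type I (Pearson type II) case: Let β ∈ {1,2,4,8}, let K ≥ 1 and N ≥ 2 be integers, let t, r ∈ ℕ, and let q > 0 be a real number with βq > 2t + r − 1 and βq ∉ ℤ; assume moreover that p := t + βK(N−1)/2 is a positive integer. Let h be given on (−∞, 1/β) by h(y) = [Γ(βK(N−1)/2 + βq + 1) / ((πβ^{−1})^{βK(N−1)/2} Γ(βq + 1))] · (1−βy)^{βq}. Then ∫₀^{1/β} v^{p−1} h^{(2t+r)}(v) dv = [Γ(t + βK(N−1)/2) Γ(r + t − βK(N−1)/2 − βq) / ((−β)^{t+βK(N−1)/2} Γ(2t + r − βq))] · h^{(2t+r)}(0), where h^{(2t+r)} denotes the (2t+r)-th derivative of h and (−β)^{p} is the p-th integer power of −β. -/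

import Mathlib

/-!
On `(-∞, 1/β)` the generator is a constant multiple of `(1 - βy)^(βq)`, so its `n`-th derivative
is `h⁽ⁿ⁾(0) (1 - βv)^(βq - n)` there, and the integral is the Beta integral
`B(p, βq - n + 1) / β^p`. Euler's reflection formula, applied at `z = n - βq` and at `z - p`,
turns `Γ(1 - z) / Γ(1 - z + p)` into `Γ(z - p) / ((-1)^p Γ(z))`; this needs `βq ∉ ℤ`.
-/

open MeasureTheory Real

theorem integral_rpow_mul_one_sub_rpow {a b : ℝ} (ha : 0 < a) (hb : 0 < b) :
    ∫ x in (0 : ℝ)..1, x ^ (a - 1) * (1 - x) ^ (b - 1) = Gamma a * Gamma b / Gamma (a + b) := by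
  apply Complex.ofReal_injective
  push_cast
  rw [← Complex.Gamma_ofReal, ← Complex.Gamma_ofReal, ← Complex.Gamma_ofReal, Complex.ofReal_add,
    ← Complex.betaIntegral_eq_Gamma_mul_div _ _ (by simpa) (by simpa), Complex.betaIntegral,
    ← intervalIntegral.integral_ofReal]
  refine intervalIntegral.integral_congr fun x hx => ?_
  rw [Set.uIcc_of_le zero_le_one] at hx
  push_cast
  rw [Complex.ofReal_cpow hx.1, Complex.ofReal_cpow (sub_nonneg.2 hx.2)]
  push_cast
  rfl

theorem integral_rpow_mul_one_sub_mul_rpow {a b c : ℝ} (ha : 0 < a) (hb : 0 < b) (hc : 0 < c) :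
    ∫ x in (0 : ℝ)..1 / c, x ^ (a - 1) * (1 - c * x) ^ (b - 1) =
      Gamma a * Gamma b / Gamma (a + b) / c ^ a := by
  have hscale : ∀ x ∈ Set.uIcc 0 (1 / c), x ^ (a - 1) * (1 - c * x) ^ (b - 1) =
      c ^ (1 - a) * ((c * x) ^ (a - 1) * (1 - c * x) ^ (b - 1)) := by
    intro x hx
    rw [Set.uIcc_of_le (by positivity)] at hx
    rw [mul_rpow hc.le hx.1, ← mul_assoc, ← mul_assoc, ← rpow_add hc]
    simp
  rw [intervalIntegral.integral_congr hscale, intervalIntegral.integral_const_mul,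
    intervalIntegral.integral_comp_mul_left (fun u => u ^ (a - 1) * (1 - u) ^ (b - 1)) hc.ne',
    mul_zero, mul_one_div_cancel hc.ne', integral_rpow_mul_one_sub_rpow ha hb, smul_eq_mul,
    ← mul_assoc, ← rpow_neg_one, ← rpow_add hc, show 1 - a + -1 = -a by ring, rpow_neg hc.le]
  ring

theorem iter_deriv_comp_const_sub_mul {𝕜 : Type*} [NontriviallyNormedField 𝕜] (f : 𝕜 → 𝕜)
    (a c : 𝕜) (k : ℕ) :
    deriv^[k] (fun y => f (a - c * y)) = fun y => (-c) ^ k * deriv^[k] f (a - c * y) := by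
  induction k with
  | zero => simp
  | succ k ih =>
    ext y
    have hcomp := deriv_comp_mul_left (f := fun u => deriv^[k] f (a - u)) (c := c) (x := y)
    simp only [deriv_comp_const_sub, smul_eq_mul] at hcomp
    rw [Function.iterate_succ_apply', ih, Function.iterate_succ_apply', deriv_const_mul_field,
      hcomp, pow_succ]
    ring

theorem iteratedDeriv_one_sub_mul_rpow (c s x : ℝ) (k : ℕ) :
    iteratedDeriv k (fun y => (1 - c * y) ^ s) x =
      (-c) ^ k * (descPochhammer ℝ k).eval s * (1 - c * x) ^ (s - k) := by
  rw [iteratedDeriv_eq_iterate, iter_deriv_comp_const_sub_mul (· ^ s)]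
  dsimp only
  rw [iter_deriv_rpow_const, mul_assoc]

theorem Gamma_sub_nat_mul_Gamma_one_sub_sub_nat (z : ℝ) (p : ℕ) :
    Gamma (z - p) * Gamma (1 - (z - p)) = (-1) ^ p * (Gamma z * Gamma (1 - z)) := by
  rw [Gamma_mul_Gamma_one_sub, Gamma_mul_Gamma_one_sub, mul_sub, mul_comm π (p : ℝ),
    sin_sub_nat_mul_pi]
  rcases neg_one_pow_eq_or ℝ p with h | h <;> rw [h] <;> ring

theorem Gamma_one_sub_div_Gamma_one_sub_sub_nat {z : ℝ} (hz : ∀ m : ℤ, z ≠ m) (p : ℕ) :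
    Gamma (1 - z) / Gamma (1 - (z - p)) = Gamma (z - p) / ((-1) ^ p * Gamma z) := by
  have hΓz : Gamma z ≠ 0 :=
    Gamma_ne_zero fun m hm => hz (-m) (by push_cast; exact hm)
  have hΓ : Gamma (1 - (z - p)) ≠ 0 :=
    Gamma_ne_zero fun m hm => hz (1 + p + m) (by push_cast; linarith)
  rw [div_eq_div_iff hΓ (mul_ne_zero (pow_ne_zero p (by norm_num)) hΓz),
    Gamma_sub_nat_mul_Gamma_one_sub_sub_nat]
  ring

theorem integral_rpow_mul_iteratedDeriv_one_sub_mul_rpow {c p s : ℝ} (hc : 0 < c) (hp : 0 < p)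
    {n : ℕ} (hs : (n : ℝ) - 1 < s) :
    ∫ v in (0 : ℝ)..1 / c, v ^ (p - 1) * iteratedDeriv n (fun y => (1 - c * y) ^ s) v =
      Gamma p * Gamma (s - n + 1) / Gamma (p + (s - n + 1)) / c ^ p *
        iteratedDeriv n (fun y => (1 - c * y) ^ s) 0 := by
  simp_rw [iteratedDeriv_one_sub_mul_rpow, mul_zero, sub_zero, one_rpow, mul_one,
    mul_left_comm _ ((-c) ^ n * _), intervalIntegral.integral_const_mul]
  rw [show s - n = (s - n + 1) - 1 by ring,
    integral_rpow_mul_one_sub_mul_rpow hp (by linarith : 0 < s - n + 1) hc, sub_add_cancel]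
  ring

theorem affine_shape_kernel_integral_pearsonII_general
    (β : ℝ) (hβ : β ∈ ({1, 2, 4, 8} : Set ℝ))
    (K N : ℕ) (t r : ℕ)
    (q : ℝ) (hq1 : 2 * (t : ℝ) + r - 1 < β * q)
    (hq2 : ∀ z : ℤ, β * q ≠ (z : ℝ))
    (p : ℕ) (hp : 1 ≤ p) (hpdef : (p : ℝ) = (t : ℝ) + β * K * ((N : ℝ) - 1) / 2)
    (h : ℝ → ℝ)
    (hdef : ∀ y ∈ Set.Iio (1 / β), h y =
      (Real.Gamma (β * K * ((N : ℝ) - 1) / 2 + β * q + 1) /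
          ((Real.pi * β⁻¹) ^ (β * K * ((N : ℝ) - 1) / 2) * Real.Gamma (β * q + 1))) *
        (1 - β * y) ^ (β * q)) :
    ∫ v in (0 : ℝ)..(1 / β), v ^ ((p : ℝ) - 1) * iteratedDeriv (2 * t + r) h v =
      (Real.Gamma ((t : ℝ) + β * K * ((N : ℝ) - 1) / 2) *
          Real.Gamma ((r : ℝ) + t - β * K * ((N : ℝ) - 1) / 2 - β * q) /
          ((-β) ^ p * Real.Gamma (2 * (t : ℝ) + r - β * q))) *
        iteratedDeriv (2 * t + r) h 0 := by
  have hβpos : 0 < β := by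
    rcases hβ with rfl | rfl | rfl | rfl <;> norm_num
  set n := 2 * t + r
  set C := Real.Gamma (β * K * ((N : ℝ) - 1) / 2 + β * q + 1) /
    ((Real.pi * β⁻¹) ^ (β * K * ((N : ℝ) - 1) / 2) * Real.Gamma (β * q + 1))
  have hn : (n : ℝ) = 2 * t + r := by push_cast [n]; rfl
  have hderiv : Set.EqOn (iteratedDeriv n h)
      (fun v => C * iteratedDeriv n (fun y => (1 - β * y) ^ (β * q)) v) (Set.Iio (1 / β)) :=
    fun v hv => (Set.EqOn.iteratedDeriv_of_isOpen hdef isOpen_Iio n hv).trans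
      (iteratedDeriv_const_mul_field _ _)
  have hintegral : ∫ v in (0 : ℝ)..1 / β, v ^ ((p : ℝ) - 1) * iteratedDeriv n h v =
      C * ∫ v in (0 : ℝ)..1 / β,
        v ^ ((p : ℝ) - 1) * iteratedDeriv n (fun y => (1 - β * y) ^ (β * q)) v := by
    rw [← intervalIntegral.integral_const_mul]
    refine intervalIntegral.integral_congr_ae ?_
    filter_upwards [volume.ae_ne (1 / β)] with v hv hvI
    rw [Set.uIoc_of_le (by positivity)] at hvI
    rw [hderiv (lt_of_le_of_ne hvI.2 hv)]
    ring
  have hz : ∀ m : ℤ, (n : ℝ) - β * q ≠ m := fun m hm =>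
    hq2 (n - m) (by push_cast; linarith)
  rw [hintegral, hderiv (by simpa using hβpos : (0 : ℝ) ∈ Set.Iio (1 / β)),
    integral_rpow_mul_iteratedDeriv_one_sub_mul_rpow hβpos (Nat.cast_pos.2 hp) (by linarith),
    rpow_natCast, ← hpdef, show β * q - n + 1 = 1 - (n - β * q) by ring,
    show (p : ℝ) + (1 - (n - β * q)) = 1 - (n - β * q - p) by ring, mul_div_assoc,
    Gamma_one_sub_div_Gamma_one_sub_sub_nat hz, ← hn,
    show (r : ℝ) + t - β * K * ((N : ℝ) - 1) / 2 - β * q = n - β * q - p by rw [hn, hpdef]; ring,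
    neg_pow β]
  ring

/-- **Theorem 3.4, Gegenbauer type I (Pearson type II) case.**
For `β ∈ {1,2,4,8}`, `q > 0` with `βq > 2t+r-1`, `βq` not an integer, and
`p = t + βK(N-1)/2` a positive integer, with
`h(y) = [Γ(βK(N-1)/2+βq+1) / ((πβ⁻¹)^{βK(N-1)/2} Γ(βq+1))] (1-βy)^{βq}` on `(-∞, 1/β)`,
one has `∫₀^{1/β} v^{p-1} h^{(2t+r)}(v) dv =
[Γ(t+βK(N-1)/2) Γ(r+t-βK(N-1)/2-βq) / ((-β)^p Γ(2t+r-βq))] h^{(2t+r)}(0)`. -/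
theorem affine_shape_kernel_integral_pearsonII
    (β : ℝ) (hβ : β ∈ ({1, 2, 4, 8} : Set ℝ))
    (K N : ℕ) (hK : 1 ≤ K) (hN : 2 ≤ N) (t r : ℕ)
    (q : ℝ) (hq : 0 < q) (hq1 : 2 * (t : ℝ) + r - 1 < β * q)
    (hq2 : ∀ z : ℤ, β * q ≠ (z : ℝ))
    (p : ℕ) (hp : 1 ≤ p) (hpdef : (p : ℝ) = (t : ℝ) + β * K * ((N : ℝ) - 1) / 2)
    (h : ℝ → ℝ)
    (hdef : ∀ y ∈ Set.Iio (1 / β), h y =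
      (Real.Gamma (β * K * ((N : ℝ) - 1) / 2 + β * q + 1) /
          ((Real.pi * β⁻¹) ^ (β * K * ((N : ℝ) - 1) / 2) * Real.Gamma (β * q + 1))) *
        (1 - β * y) ^ (β * q)) :
    ∫ v in (0 : ℝ)..(1 / β), v ^ ((p : ℝ) - 1) * iteratedDeriv (2 * t + r) h v =
      (Real.Gamma ((t : ℝ) + β * K * ((N : ℝ) - 1) / 2) *
          Real.Gamma ((r : ℝ) + t - β * K * ((N : ℝ) - 1) / 2 - β * q) /
          ((-β) ^ p * Real.Gamma (2 * (t : ℝ) + r - β * q))) *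
        iteratedDeriv (2 * t + r) h 0 :=
  affine_shape_kernel_integral_pearsonII_general β hβ K N t r q hq1 hq2 p hp hpdef h hdef
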